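/- The firmware and guest message counters are always synchronised: in every reachable state (gc, fc, ph) of the guest-message counter system, either fc = gc or fc = gc + 2. (This is the paper's supporting lemma family SupFWAndGVMMsgCountersAreInSync.) -/
import Mathlib


/-- The two honest agents exchanging guest messages: the SNP-protected guest
and the AMD-SP firmware. -/
inductive Agent : Type
  | Guest
  | FW
deriving DecidableEq

/-- The phase of the guest: idle, or waiting for a firmware response. -/
inductive Phase : Type
  | Idle
  | Waiting
deriving DecidableEq

/-- A state of the guest-message counter system: the guest's message counter,
the firmware's message counter, and the phase. The initial state is `⟨0, 0, Idle⟩`. -/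
structure St : Type where
  gc : ℕ
  fc : ℕ
  ph : Phase

/-- An encryption event: the logging agent, the nonce (message counter) used,
and the payload of type `M`. -/
abbrev EncEvent (M : Type) : Type := Agent × ℕ × M

/-- `Reach M s evs` holds iff, starting from the initial state `(0, 0, Idle)`,
the guest-message counter system can reach the state `s` having logged exactly
the list of encryption events `evs`, in order.  The transitions are:
`send` (the guest encrypts a request under nonce `gc`), `serve` (the firmware,
whose counter equals the guest's, encrypts a response under nonce `fc + 1` and
advances its counter by two), and `recv` (the guest, whose counter is two behind
the firmware's, receives the response and advances its counter by two). -/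
inductive Reach (M : Type) : St → List (EncEvent M) → Prop
  | init : Reach M ⟨0, 0, Phase.Idle⟩ []
  | send {gc fc : ℕ} {evs : List (EncEvent M)} (m : M) :
      Reach M ⟨gc, fc, Phase.Idle⟩ evs →
      Reach M ⟨gc, fc, Phase.Waiting⟩ (evs ++ [(Agent.Guest, gc, m)])
  | serve {gc fc : ℕ} {evs : List (EncEvent M)} (m : M) :
      Reach M ⟨gc, fc, Phase.Waiting⟩ evs → fc = gc →
      Reach M ⟨gc, fc + 2, Phase.Waiting⟩ (evs ++ [(Agent.FW, fc + 1, m)])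
  | recv {gc fc : ℕ} {evs : List (EncEvent M)} :
      Reach M ⟨gc, fc, Phase.Waiting⟩ evs → fc = gc + 2 →
      Reach M ⟨gc + 2, fc, Phase.Idle⟩ evs

/-- SupFWAndGVMMsgCountersAreInSync: in every reachable state `(gc, fc, ph)` of the
guest-message counter system, the firmware and guest message counters are
synchronised: either `fc = gc` or `fc = gc + 2`. -/
theorem SupFWAndGVMMsgCountersAreInSync (M : Type) (gc fc : ℕ) (ph : Phase)
    (evs : List (EncEvent M)) (h : Reach M ⟨gc, fc, ph⟩ evs) :
    fc = gc ∨ fc = gc + 2 := by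
  generalize hs : (⟨gc, fc, ph⟩ : St) = s at h
  induction h generalizing gc fc ph with
  | init => cases hs; left; rfl
  | send m _ ih => cases hs; exact ih _ _ _ rfl
  | serve m _ he ih => cases hs; have := ih _ _ _ rfl; omega
  | recv _ he ih => cases hs; have := ih _ _ _ rfl; omega
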